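/- Let p be a probability mass function on ℕ+, let n be a positive integer, and let P^n be the n-fold product measure on ℕ+^n. For x ∈ ℕ+^n let Z_n(x) be the number of distinct symbols appearing in x, and let E[Z_n] be its expectation under P^n. Then P^n{ x : Z_n(x) ≤ (1/2)·E[Z_n] } ≤ exp( − E[Z_n]/8 ), where exp is the natural exponential. -/

import Mathlib

open scoped ENNReal BigOperators

noncomputable section

/-- `p` is a probability mass function on `α`. -/
def IsPmf {α : Type*} (p : α → ℝ) : Prop := (∀ a, 0 ≤ p a) ∧ HasSum p 1

/-- The `n`-fold product probability mass function. -/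
def prodPmf {α : Type*} (p : α → ℝ) (n : ℕ) : (Fin n → α) → ℝ :=
  fun x => ∏ i, p (x i)

/-- base-2 logarithm of the ratio `a / b`, valued in `[0,∞]`:
it is `⊤` when `b = 0 < a`, and clipped at `0` from below (which does not affect
the suprema defining minimax regret, which are always nonnegative). -/
def regretTerm (a b : ℝ) : ℝ≥0∞ :=
  if a ≤ 0 then 0 else if b ≤ 0 then ⊤ else ENNReal.ofReal (Real.logb 2 (a / b))

/-- Minimax regret (base 2) of the class `Λ` for word length `n`, valued in `[0,∞]`. -/
def minimaxRegret {α : Type*} (Λ : Set (α → ℝ)) (n : ℕ) : ℝ≥0∞ :=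
  ⨅ (Q : (Fin n → α) → ℝ) (_ : IsPmf Q),
    ⨆ (x : Fin n → α), ⨆ P ∈ Λ, regretTerm (prodPmf P n x) (Q x)

/- Kullback-Leibler divergence `D(p‖q)` in base 2, valued in `[0,∞]`.
It is `⊤` unless `q` dominates `p`; otherwise it is computed through the
pointwise-nonnegative decomposition `p log(p/q) + q - p` (summing to
`Σ p log(p/q)` since `Σ p = Σ q = 1`), converted from nats to bits. -/
open Classical in
def klDiv2 {α : Type*} (p q : α → ℝ) : ℝ≥0∞ :=
  if ∃ a, q a = 0 ∧ 0 < p a then ⊤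
  else (∑' a, ENNReal.ofReal (p a * Real.log (p a / q a) + q a - p a)) /
       ENNReal.ofReal (Real.log 2)

/-- Minimax redundancy (base 2) of the class `Λ` for word length `n`, valued in `[0,∞]`. -/
def minimaxRedundancy {α : Type*} (Λ : Set (α → ℝ)) (n : ℕ) : ℝ≥0∞ :=
  ⨅ (Q : (Fin n → α) → ℝ) (_ : IsPmf Q), ⨆ P ∈ Λ, klDiv2 (prodPmf P n) Q

/-- The envelope class defined by the envelope function `f`. -/
def envClass (f : ℕ+ → ℝ) : Set (ℕ+ → ℝ) := {P | IsPmf P ∧ ∀ k, P k ≤ f k}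

/-!
Chernoff's method with the weight `2 ^ (-Z)`: on `{Z ≤ E/2}` one has `1 ≤ 2 ^ (E/2) · 2 ^ (-Z)`,
so it suffices to show `E[2 ^ (-Z)] ≤ exp (-E/2)`. For a finite set `T` of symbols,
`2 ^ (-Z) ≤ ∏_{k ∈ T} (1 + 1[k ∉ x]) / 2`; expanding the product, each term is the indicator that
`x` avoids some `S ⊆ T`, whose probability `(1 - p(S))^n` is at most `∏_{k ∈ S} (1 - p k)^n`
(Weierstrass' product inequality). Collecting the terms again gives
`∏_{k ∈ T} (1 - q_k / 2) ≤ exp (-∑_{k ∈ T} q_k / 2)` with `q_k = 1 - (1 - p k)^n`, and `T` may grow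
to all of `ℕ+`. Finally `2 ^ (E/2) · exp (-E/2) ≤ exp (-E/8)` because `log 2 ≤ 3/4`.
-/

section

variable {α : Type*}

theorem IsPmf.le_one {p : α → ℝ} (hp : IsPmf p) (a : α) : p a ≤ 1 :=
  le_hasSum hp.2 a fun b _ => hp.1 b

theorem IsPmf.one_sub_nonneg {p : α → ℝ} (hp : IsPmf p) (a : α) : 0 ≤ 1 - p a :=
  sub_nonneg.2 (hp.le_one a)

theorem IsPmf.one_sub_pow_le_one {p : α → ℝ} (hp : IsPmf p) (n : ℕ) (a : α) :
    (1 - p a) ^ n ≤ 1 :=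
  pow_le_one₀ (hp.one_sub_nonneg a) (by linarith [hp.1 a])

theorem hasSum_pi_prod_of_nonneg {g : α → ℝ} (hg : ∀ a, 0 ≤ g a) {r : ℝ} (h : HasSum g r)
    (n : ℕ) : HasSum (fun x : Fin n → α => ∏ i, g (x i)) (r ^ n) := by
  induction n with
  | zero => simp
  | succ n ih =>
    have hsum : Summable fun z : α × (Fin n → α) => g z.1 * ∏ i, g (z.2 i) :=
      Summable.mul_of_nonneg (f := g) (g := fun y : Fin n → α => ∏ i, g (y i)) h.summable
        ih.summable hg fun y => Finset.prod_nonneg fun i _ => hg _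
    have hcons : (fun x : Fin (n + 1) → α => ∏ i, g (x i)) ∘ Fin.consEquiv (fun _ => α) =
        fun z => g z.1 * ∏ i, g (z.2 i) := by
      funext z
      simp [Fin.consEquiv, Fin.prod_univ_succ]
    rw [pow_succ', ← (Fin.consEquiv fun _ => α).hasSum_iff, hcons]
    exact HasSum.mul (f := g) (g := fun y : Fin n → α => ∏ i, g (y i)) h ih hsum

theorem one_sub_sum_le_prod_one_sub (S : Finset α) {f : α → ℝ} (h0 : ∀ a ∈ S, 0 ≤ f a)
    (h1 : ∀ a ∈ S, f a ≤ 1) : 1 - ∑ a ∈ S, f a ≤ ∏ a ∈ S, (1 - f a) := by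
  classical
  induction S using Finset.induction_on with
  | empty => simp
  | @insert a s ha ih =>
    rw [Finset.sum_insert ha, Finset.prod_insert ha]
    have ih := ih (fun b hb => h0 b (Finset.mem_insert_of_mem hb))
      (fun b hb => h1 b (Finset.mem_insert_of_mem hb))
    have hs : 0 ≤ ∑ b ∈ s, f b := Finset.sum_nonneg fun b hb => h0 b (Finset.mem_insert_of_mem hb)
    nlinarith [h0 a (Finset.mem_insert_self a s), h1 a (Finset.mem_insert_self a s)]

theorem Summable.mul_half_pow {β : Type*} {F : β → ℝ} (hF : Summable F) (hF0 : ∀ x, 0 ≤ F x)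
    (Z : β → ℕ) : Summable fun x => F x * (1 / 2 : ℝ) ^ Z x :=
  hF.of_nonneg_of_le (fun x => mul_nonneg (hF0 x) (by positivity))
    fun x => mul_le_of_le_one_right (hF0 x) (pow_le_one₀ (by norm_num) (by norm_num))

theorem tsum_indicator_le_two_rpow_mul_tsum {β : Type*} {F : β → ℝ} (hF0 : ∀ x, 0 ≤ F x)
    (hF : Summable F) (Z : β → ℕ) (t : ℝ) :
    ∑' x, {x | (Z x : ℝ) ≤ t}.indicator F x ≤ (2 : ℝ) ^ t * ∑' x, F x * (1 / 2) ^ Z x := by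
  rw [← tsum_mul_left]
  refine Summable.tsum_le_tsum (fun x => ?_)
    (hF.of_nonneg_of_le (Set.indicator_nonneg fun y _ => hF0 y)
      (Set.indicator_le_self' fun y _ => hF0 y))
    ((hF.mul_half_pow hF0 Z).mul_left _)
  by_cases hx : (Z x : ℝ) ≤ t
  · rw [Set.indicator_of_mem (show x ∈ {x | (Z x : ℝ) ≤ t} from hx)]
    have h1 : 1 ≤ (2 : ℝ) ^ t * (1 / 2) ^ Z x := by
      rw [one_div, inv_pow, ← Real.rpow_natCast, ← div_eq_mul_inv, one_le_div (by positivity)]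
      exact Real.rpow_le_rpow_of_exponent_le one_le_two hx
    nlinarith [hF0 x]
  · rw [Set.indicator_of_notMem (show x ∉ {x | (Z x : ℝ) ≤ t} from hx)]
    have := hF0 x
    positivity

theorem two_rpow_half_mul_exp_neg_half_le {E : ℝ} (hE : 0 ≤ E) :
    (2 : ℝ) ^ (E / 2) * Real.exp (-(E / 2)) ≤ Real.exp (-(E / 8)) := by
  have hlog : Real.log 2 ≤ 3 / 4 := by linarith [Real.log_two_lt_d9]
  rw [Real.rpow_def_of_pos two_pos, ← Real.exp_add]
  exact Real.exp_le_exp.2 (by nlinarith)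

end

section

variable {α : Type*} {p : α → ℝ}

theorem IsPmf.prodPmf (hp : IsPmf p) (n : ℕ) : IsPmf (prodPmf p n) :=
  ⟨fun _ => Finset.prod_nonneg fun i _ => hp.1 _, by
    have h := hasSum_pi_prod_of_nonneg hp.1 hp.2 n
    rwa [one_pow] at h⟩

theorem hasSum_prodPmf_indicator_avoid (hp : IsPmf p) (n : ℕ) (S : Finset α) :
    HasSum ({x : Fin n → α | ∀ i, x i ∉ S}.indicator (prodPmf p n)) ((1 - ∑ k ∈ S, p k) ^ n) := by
  have hS : HasSum ((↑S : Set α).indicator p) (∑ k ∈ S, p k) := by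
    convert hasSum_sum_of_ne_finset_zero (L := SummationFilter.unconditional α)
      fun b hb => Set.indicator_of_notMem hb p using 1
    exact Finset.sum_congr rfl fun k hk => (Set.indicator_of_mem hk p).symm
  have hg : HasSum ((↑S : Set α)ᶜ.indicator p) (1 - ∑ k ∈ S, p k) := by
    rw [Set.indicator_compl]
    exact hp.2.sub hS
  convert hasSum_pi_prod_of_nonneg (Set.indicator_nonneg fun a _ => hp.1 a) hg n using 1
  funext x
  classical
  simp only [Set.indicator_apply, Set.mem_ofPred_eq, Set.mem_compl_iff, Finset.mem_coe,
    Fintype.prod_ite_zero, prodPmf]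
  congr

theorem one_sub_sum_pow_le_prod_pow (hp : IsPmf p) (n : ℕ) (S : Finset α) :
    (1 - ∑ k ∈ S, p k) ^ n ≤ ∏ k ∈ S, (1 - p k) ^ n := by
  rw [Finset.prod_pow]
  refine pow_le_pow_left₀ (sub_nonneg.2 (sum_le_hasSum S (fun k _ => hp.1 k) hp.2)) ?_ n
  exact one_sub_sum_le_prod_one_sub S (fun k _ => hp.1 k) (fun k _ => hp.le_one k)

theorem summable_one_sub_one_sub_pow (hp : IsPmf p) (n : ℕ) :
    Summable fun k => 1 - (1 - p k) ^ n := by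
  refine Summable.of_nonneg_of_le (fun k => sub_nonneg.2 (hp.one_sub_pow_le_one n k))
    (fun k => ?_) (hp.2.summable.mul_left (n : ℝ))
  have := one_add_mul_le_pow (a := -p k) (by linarith [hp.le_one k]) n
  rw [← sub_eq_add_neg] at this
  linarith

variable [DecidableEq α]

theorem prod_ite_notMem_image_eq_indicator {n : ℕ} (x : Fin n → α) (S : Finset α) :
    ∏ k ∈ S, (if k ∉ Finset.univ.image x then 1 else 0 : ℝ) =
      {x : Fin n → α | ∀ i, x i ∉ S}.indicator 1 x := by
  rw [Finset.prod_boole, Set.indicator_apply]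
  congr 1
  simp only [Finset.mem_image, Finset.mem_univ, true_and, not_exists, Set.mem_ofPred_eq]
  exact propext ⟨fun h i hi => h _ hi i rfl, fun h k hk i hi => h i (hi ▸ hk)⟩

theorem half_pow_card_image_le_sum_indicator {n : ℕ} (x : Fin n → α) (T : Finset α) :
    (1 / 2 : ℝ) ^ (Finset.univ.image x).card ≤
      (1 / 2) ^ T.card * ∑ S ∈ T.powerset, {x : Fin n → α | ∀ i, x i ∉ S}.indicator 1 x := by
  have hfactor : ∀ k, (if k ∈ Finset.univ.image x then (1 / 2 : ℝ) else 1) =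
      1 / 2 * (1 + if k ∉ Finset.univ.image x then 1 else 0) := by
    intro k
    split_ifs <;> norm_num
  calc (1 / 2 : ℝ) ^ (Finset.univ.image x).card
      ≤ (1 / 2) ^ (T.filter (· ∈ Finset.univ.image x)).card :=
        pow_le_pow_of_le_one (by norm_num) (by norm_num)
          (Finset.card_le_card fun k hk => (Finset.mem_filter.1 hk).2)
    _ = ∏ k ∈ T, if k ∈ Finset.univ.image x then (1 / 2 : ℝ) else 1 := by
        rw [Finset.prod_ite, Finset.prod_const, Finset.prod_const_one, mul_one]
    _ = (1 / 2) ^ T.card * ∏ k ∈ T, (1 + if k ∉ Finset.univ.image x then 1 else 0) := by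
        simp_rw [hfactor]
        rw [Finset.prod_mul_distrib, Finset.prod_const]
    _ = _ := by
        simp_rw [Finset.prod_one_add, prod_ite_notMem_image_eq_indicator]

theorem tsum_prodPmf_mul_half_pow_le_prod (hp : IsPmf p) (n : ℕ) (T : Finset α) :
    ∑' x : Fin n → α, prodPmf p n x * (1 / 2) ^ (Finset.univ.image x).card ≤
      ∏ k ∈ T, (1 + (1 - p k) ^ n) / 2 := by
  have hF := hp.prodPmf n
  have hsum : HasSum (fun x => ∑ S ∈ T.powerset,
        (1 / 2 : ℝ) ^ T.card * {x : Fin n → α | ∀ i, x i ∉ S}.indicator (prodPmf p n) x)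
      (∑ S ∈ T.powerset, (1 / 2 : ℝ) ^ T.card * (1 - ∑ k ∈ S, p k) ^ n) :=
    hasSum_sum fun S _ => (hasSum_prodPmf_indicator_avoid hp n S).mul_left _
  calc ∑' x : Fin n → α, prodPmf p n x * (1 / 2) ^ (Finset.univ.image x).card
      ≤ ∑' x : Fin n → α, ∑ S ∈ T.powerset,
          (1 / 2 : ℝ) ^ T.card * {x : Fin n → α | ∀ i, x i ∉ S}.indicator (prodPmf p n) x := by
        refine Summable.tsum_le_tsum (fun x => ?_) (hF.2.summable.mul_half_pow hF.1 _)
          hsum.summable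
        refine (mul_le_mul_of_nonneg_left (half_pow_card_image_le_sum_indicator x T)
          (hF.1 x)).trans_eq ?_
        rw [Finset.mul_sum, Finset.mul_sum]
        refine Finset.sum_congr rfl fun S _ => ?_
        simp only [Set.indicator_apply, Pi.one_apply]
        split_ifs <;> ring
    _ = ∑ S ∈ T.powerset, (1 / 2 : ℝ) ^ T.card * (1 - ∑ k ∈ S, p k) ^ n := hsum.tsum_eq
    _ ≤ ∑ S ∈ T.powerset, (1 / 2 : ℝ) ^ T.card * ∏ k ∈ S, (1 - p k) ^ n := by
        gcongr with S
        exact one_sub_sum_pow_le_prod_pow hp n S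
    _ = ∏ k ∈ T, (1 + (1 - p k) ^ n) / 2 := by
        rw [← Finset.mul_sum, ← Finset.prod_one_add, ← Finset.prod_const, ← Finset.prod_mul_distrib]
        exact Finset.prod_congr rfl fun k _ => by ring

theorem tsum_prodPmf_mul_half_pow_le_exp (hp : IsPmf p) (n : ℕ) {E : ℝ}
    (hE : HasSum (fun k => 1 - (1 - p k) ^ n) E) :
    ∑' x : Fin n → α, prodPmf p n x * (1 / 2) ^ (Finset.univ.image x).card ≤
      Real.exp (-(E / 2)) := by
  have hpartial : Filter.Tendsto (fun T : Finset α => ∑ k ∈ T, (1 - (1 - p k) ^ n))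
      Filter.atTop (nhds E) := hE
  have hlim : Filter.Tendsto (fun T : Finset α => Real.exp (-(∑ k ∈ T, (1 - (1 - p k) ^ n)) / 2))
      Filter.atTop (nhds (Real.exp (-E / 2))) :=
    (Real.continuous_exp.tendsto _).comp (hpartial.neg.div_const 2)
  rw [← neg_div]
  refine ge_of_tendsto' hlim fun T => (tsum_prodPmf_mul_half_pow_le_prod hp n T).trans ?_
  rw [neg_div, Finset.sum_div, ← Finset.sum_neg_distrib, Real.exp_sum]
  refine Finset.prod_le_prod (fun k _ => by linarith [pow_nonneg (hp.one_sub_nonneg k) n])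
    fun k _ => ?_
  linarith [Real.add_one_le_exp (-((1 - (1 - p k) ^ n) / 2))]

end

theorem stmt17_general (p : ℕ+ → ℝ) (hp : IsPmf p) (n : ℕ)
    (E : ℝ) (hE : E = ∑' k : ℕ+, (1 - (1 - p k) ^ n)) :
    (∑' x : Fin n → ℕ+,
        Set.indicator
          {x : Fin n → ℕ+ | ((Finset.univ.image x).card : ℝ) ≤ E / 2}
          (prodPmf p n) x) ≤
      Real.exp (-(E / 8)) := by
  have hq : HasSum (fun k => 1 - (1 - p k) ^ n) E := hE ▸ (summable_one_sub_one_sub_pow hp n).hasSum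
  have hE0 : 0 ≤ E := hq.nonneg fun k => sub_nonneg.2 (hp.one_sub_pow_le_one n k)
  calc _ ≤ (2 : ℝ) ^ (E / 2) *
          ∑' x : Fin n → ℕ+, prodPmf p n x * (1 / 2) ^ (Finset.univ.image x).card :=
        tsum_indicator_le_two_rpow_mul_tsum (hp.prodPmf n).1 (hp.prodPmf n).2.summable _ _
    _ ≤ (2 : ℝ) ^ (E / 2) * Real.exp (-(E / 2)) := by
        gcongr
        exact tsum_prodPmf_mul_half_pow_le_exp hp n hq
    _ ≤ Real.exp (-(E / 8)) := two_rpow_half_mul_exp_neg_half_le hE0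

/-- Bernstein-type concentration inequality for the number of distinct
symbols `Z_n` under the `n`-fold product measure. -/
theorem stmt17 (p : ℕ+ → ℝ) (hp : IsPmf p) (n : ℕ) (hn : 1 ≤ n)
    (E : ℝ) (hE : E = ∑' k : ℕ+, (1 - (1 - p k) ^ n)) :
    (∑' x : Fin n → ℕ+,
        Set.indicator
          {x : Fin n → ℕ+ | ((Finset.univ.image x).card : ℝ) ≤ E / 2}
          (prodPmf p n) x) ≤
      Real.exp (-(E / 8)) :=
  stmt17_general p hp n E hE
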